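/- arXiv:2404.04987 — 4 statements merged into one kernel-verified Lean document; each statement's English description precedes it below -/
import Mathlib

section
/- Let G be a simple graph on a finite vertex set of n vertices and let α(G) denote the maximum cardinality of an independent set of G. Then the number of maximal independent sets of G is at most 2^(n − α(G)). -/
/-!
Fix an independent set `A`. For a maximal independent set `S`, a vertex of `A` lies in `S` exactly
when it has no neighbour in `S \ A`, so `S` is determined by `S \ A ⊆ Aᶜ`. Hence there are at most
`2 ^ (n - #A)` maximal independent sets; take `#A = α(G)`.
-/

open Finset

namespace SimpleGraph

variable {V : Type*} {G : SimpleGraph V}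

lemma isIndepSet_iff_forall_not_adj {s : Set V} :
    G.IsIndepSet s ↔ ∀ u ∈ s, ∀ v ∈ s, ¬ G.Adj u v :=
  ⟨fun h _ hu _ hv huv ↦ h hu hv (G.ne_of_adj huv) huv, fun h _ hu _ hv _ ↦ h _ hu _ hv⟩

lemma isIndepSet_insert {a : V} {s : Set V} :
    G.IsIndepSet (insert a s) ↔ G.IsIndepSet s ∧ ∀ b ∈ s, ¬ G.Adj a b := by
  rw [IsIndepSet, Set.pairwise_insert]
  exact and_congr_right fun _ ↦ forall₂_congr fun b _ ↦
    ⟨fun h hab ↦ (h (G.ne_of_adj hab)).1 hab, fun h _ ↦ ⟨h, fun hba ↦ h hba.symm⟩⟩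

lemma maximal_isIndepSet_coe_iff [DecidableEq V] {s : Finset V} :
    Maximal (fun t : Finset V ↦ G.IsIndepSet t) s ↔ Maximal G.IsIndepSet (s : Set V) := by
  rw [Finset.maximal_iff_forall_insert fun _ _ ht hst ↦ Set.Pairwise.mono (coe_subset.2 hst) ht,
    Set.maximal_iff_forall_insert fun _ _ ht hst ↦ Set.Pairwise.mono hst ht]
  simp only [coe_insert, mem_coe]

lemma mem_iff_forall_not_adj_of_maximal {S : Set V} (hS : Maximal G.IsIndepSet S) {a : V} :
    a ∈ S ↔ ∀ b ∈ S, ¬ G.Adj a b :=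
  ⟨fun ha _ hb hab ↦ hS.prop ha hb (G.ne_of_adj hab) hab,
    fun h ↦ hS.mem_of_prop_insert (isIndepSet_insert.2 ⟨hS.prop, h⟩)⟩

lemma mem_iff_forall_not_adj_sdiff_of_maximal {S A : Set V} (hS : Maximal G.IsIndepSet S)
    (hA : G.IsIndepSet A) {a : V} (ha : a ∈ A) :
    a ∈ S ↔ ∀ b ∈ S \ A, ¬ G.Adj a b := by
  rw [mem_iff_forall_not_adj_of_maximal hS]
  refine ⟨fun h b hb ↦ h b hb.1, fun h b hb hab ↦ ?_⟩
  by_cases hbA : b ∈ A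
  · exact hA ha hbA (G.ne_of_adj hab) hab
  · exact h b ⟨hb, hbA⟩ hab

lemma injOn_sdiff_maximal_isIndepSet {A : Set V} (hA : G.IsIndepSet A) :
    Set.InjOn (· \ A) {S | Maximal G.IsIndepSet S} := by
  intro S hS T hT hST
  ext a
  by_cases ha : a ∈ A
  · rw [mem_iff_forall_not_adj_sdiff_of_maximal hS hA ha,
      mem_iff_forall_not_adj_sdiff_of_maximal hT hA ha, show S \ A = T \ A from hST]
  · simpa [ha] using congrArg (a ∈ ·) hST

theorem ncard_maximal_isIndepSet_le [Fintype V] {A : Finset V} (hA : G.IsIndepSet (A : Set V)) :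
    {s : Finset V | Maximal G.IsIndepSet (s : Set V)}.ncard ≤ 2 ^ (Fintype.card V - #A) := by
  classical
  calc {s : Finset V | Maximal G.IsIndepSet (s : Set V)}.ncard
      ≤ (Aᶜ.powerset : Set (Finset V)).ncard := by
        refine Set.ncard_le_ncard_of_injOn (· \ A) (fun s _ ↦ ?_) (fun s hs t ht hst ↦ ?_)
          (Finset.finite_toSet _)
        · simp [Finset.sdiff_eq_inter_compl]
        · refine coe_injective (injOn_sdiff_maximal_isIndepSet hA hs ht ?_)
          simpa only [coe_sdiff] using congrArg ((↑) : Finset V → Set V) hst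
    _ = 2 ^ (Fintype.card V - #A) := by
        rw [Set.ncard_coe_finset, card_powerset, card_compl]

end SimpleGraph

open SimpleGraph in
/-- The number of maximal independent sets of an `n`-vertex graph `G` is at most
`2 ^ (n - α(G))`, where `α(G)` is the independence number of `G`. -/
theorem stmt2 {V : Type*} [Fintype V] (G : SimpleGraph V) (α : ℕ)
    (hα : IsGreatest {m : ℕ |
      ∃ s : Finset V, (∀ u ∈ s, ∀ v ∈ s, ¬ G.Adj u v) ∧ s.card = m} α) :
    ({s : Finset V | (∀ u ∈ s, ∀ v ∈ s, ¬ G.Adj u v) ∧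
        ∀ t : Finset V, (∀ u ∈ t, ∀ v ∈ t, ¬ G.Adj u v) → s ⊆ t → t = s}.ncard)
      ≤ 2 ^ (Fintype.card V - α) := by
  classical
  obtain ⟨⟨A, hA, rfl⟩, -⟩ := hα
  convert ncard_maximal_isIndepSet_le (isIndepSet_iff_forall_not_adj.2 hA) using 2
  ext s
  rw [Set.mem_ofPred_eq, Set.mem_ofPred_eq, ← maximal_isIndepSet_coe_iff, maximal_iff]
  simp only [isIndepSet_iff_forall_not_adj, mem_coe, eq_comm]
end

section
/- Let k ≥ 4 be an integer, let d be a real number, and let s_1 ≥ s_2 ≥ ... ≥ s_k ≥ 0 be real numbers in nonascending order with s_1 + ... + s_k = n. If s_1 ≤ n/2 − d and s_1 + s_2 + s_3 + s_4 ≤ n − 6d, then the index set {1, ..., k} can be partitioned into three (possibly empty) sets P_1, P_2, P_3 such that for each j ∈ {1,2,3} the sum of the s_i with i ∈ P_j is at most n/2 − d. -/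
private lemma key_bound (a b c x n d : ℝ) (hsum : a + b + c + x ≤ n)
    (hx : 4 * x ≤ n - 6 * d) (hab : a ≤ b) (hac : a ≤ c) :
    a + x ≤ n / 2 - d := by linarith

/-- Semi-balanced size profiles can be partitioned into three parts, each of
total size at most `n / 2 - d`. -/
theorem stmt4 (k : ℕ) (hk : 4 ≤ k) (n d : ℝ) (s : Fin k → ℝ)
    (hmono : ∀ i j : Fin k, i ≤ j → s j ≤ s i) (hpos : ∀ i, 0 ≤ s i)
    (hsum : ∑ i, s i = n)
    (h1 : s ⟨0, by omega⟩ ≤ n / 2 - d)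
    (h2 : s ⟨0, by omega⟩ + s ⟨1, by omega⟩ + s ⟨2, by omega⟩ + s ⟨3, by omega⟩ ≤ n - 6 * d) :
    ∃ P₁ P₂ P₃ : Finset (Fin k),
      Disjoint P₁ P₂ ∧ Disjoint P₁ P₃ ∧ Disjoint P₂ P₃ ∧
      P₁ ∪ P₂ ∪ P₃ = Finset.univ ∧
      (∑ i ∈ P₁, s i ≤ n / 2 - d) ∧ (∑ i ∈ P₂, s i ≤ n / 2 - d) ∧
      (∑ i ∈ P₃, s i ≤ n / 2 - d) := by
  -- chain of monotonicity among the first four elements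
  have h10 : s ⟨1, by omega⟩ ≤ s ⟨0, by omega⟩ := hmono _ _ (by simp [Fin.le_def])
  have h21 : s ⟨2, by omega⟩ ≤ s ⟨1, by omega⟩ := hmono _ _ (by simp [Fin.le_def])
  have h32 : s ⟨3, by omega⟩ ≤ s ⟨2, by omega⟩ := hmono _ _ (by simp [Fin.le_def])
  have h3bd : 4 * s ⟨3, by omega⟩ ≤ n - 6 * d := by linarith
  have main : ∀ m : ℕ, 3 ≤ m → m ≤ k → ∃ P₁ P₂ P₃ : Finset (Fin k),
      Disjoint P₁ P₂ ∧ Disjoint P₁ P₃ ∧ Disjoint P₂ P₃ ∧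
      P₁ ∪ P₂ ∪ P₃ = Finset.univ.filter (fun i => i.val < m) ∧
      (∑ i ∈ P₁, s i ≤ n / 2 - d) ∧ (∑ i ∈ P₂, s i ≤ n / 2 - d) ∧
      (∑ i ∈ P₃, s i ≤ n / 2 - d) := by
    intro m hm3
    induction m, hm3 using Nat.le_induction with
    | base =>
      intro hmk
      refine ⟨{⟨0, by omega⟩}, {⟨1, by omega⟩}, {⟨2, by omega⟩}, ?_, ?_, ?_, ?_, ?_, ?_, ?_⟩
      · simp [Finset.disjoint_singleton, Fin.ext_iff]
      · simp [Finset.disjoint_singleton, Fin.ext_iff]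
      · simp [Finset.disjoint_singleton, Fin.ext_iff]
      · ext i
        simp [Fin.ext_iff]
        omega
      · simpa using h1
      · simpa using le_trans h10 h1
      · simpa using le_trans (le_trans h21 h10) h1
    | succ m hm ih =>
      intro hmk
      obtain ⟨P₁, P₂, P₃, d12, d13, d23, hu, b1, b2, b3⟩ := ih (by omega)
      set x : Fin k := ⟨m, by omega⟩ with hxdef
      have hxbd : 4 * s x ≤ n - 6 * d := by
        have : s x ≤ s ⟨3, by omega⟩ := hmono _ _ (by simp [Fin.le_def]; omega)
        linarith
      have step : ∀ Q₁ Q₂ Q₃ : Finset (Fin k),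
          Disjoint Q₁ Q₂ → Disjoint Q₁ Q₃ → Disjoint Q₂ Q₃ →
          Q₁ ∪ Q₂ ∪ Q₃ = Finset.univ.filter (fun i => i.val < m) →
          (∑ i ∈ Q₂, s i ≤ n / 2 - d) → (∑ i ∈ Q₃, s i ≤ n / 2 - d) →
          (∑ i ∈ Q₁, s i ≤ ∑ i ∈ Q₂, s i) → (∑ i ∈ Q₁, s i ≤ ∑ i ∈ Q₃, s i) →
          ∃ P₁ P₂ P₃ : Finset (Fin k),
            Disjoint P₁ P₂ ∧ Disjoint P₁ P₃ ∧ Disjoint P₂ P₃ ∧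
            P₁ ∪ P₂ ∪ P₃ = Finset.univ.filter (fun i => i.val < m + 1) ∧
            (∑ i ∈ P₁, s i ≤ n / 2 - d) ∧ (∑ i ∈ P₂, s i ≤ n / 2 - d) ∧
            (∑ i ∈ P₃, s i ≤ n / 2 - d) := by
        intro Q₁ Q₂ Q₃ e12 e13 e23 hQu hb2 hb3 hle2 hle3
        have hmemQ : ∀ i ∈ Q₁ ∪ Q₂ ∪ Q₃, (i : Fin k).val < m := by
          intro i hi; rw [hQu] at hi; simpa using hi
        have hx1 : x ∉ Q₁ := fun h => Nat.lt_irrefl m (hmemQ x (by simp [Finset.mem_union, h]))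
        have hx2 : x ∉ Q₂ := fun h => Nat.lt_irrefl m (hmemQ x (by simp [Finset.mem_union, h]))
        have hx3 : x ∉ Q₃ := fun h => Nat.lt_irrefl m (hmemQ x (by simp [Finset.mem_union, h]))
        have e1_23 : Disjoint (Q₁ ∪ Q₂) Q₃ := Finset.disjoint_union_left.mpr ⟨e13, e23⟩
        have hxall : x ∉ Q₁ ∪ Q₂ ∪ Q₃ := by
          simp [Finset.mem_union, hx1, hx2, hx3]
        have hT : ∑ i ∈ insert x (Q₁ ∪ Q₂ ∪ Q₃), s i ≤ n :=
          hsum ▸ Finset.sum_le_sum_of_subset_of_nonneg (Finset.subset_univ _)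
            (fun i _ _ => hpos i)
        rw [Finset.sum_insert hxall, Finset.sum_union e1_23, Finset.sum_union e12] at hT
        refine ⟨insert x Q₁, Q₂, Q₃, ?_, ?_, e23, ?_, ?_, hb2, hb3⟩
        · exact Finset.disjoint_insert_left.mpr ⟨hx2, e12⟩
        · exact Finset.disjoint_insert_left.mpr ⟨hx3, e13⟩
        · have : insert x Q₁ ∪ Q₂ ∪ Q₃ = insert x (Q₁ ∪ Q₂ ∪ Q₃) := by
            rw [Finset.insert_union, Finset.insert_union]
          rw [this, hQu]
          ext i
          simp [Fin.ext_iff, hxdef]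
          omega
        · rw [Finset.sum_insert hx1]
          have := key_bound (∑ i ∈ Q₁, s i) (∑ i ∈ Q₂, s i) (∑ i ∈ Q₃, s i)
            (s x) n d (by linarith) hxbd hle2 hle3
          linarith
      have huswap : ∀ {A B C : Finset (Fin k)},
          A ∪ B ∪ C = Finset.univ.filter (fun i => i.val < m) →
          B ∪ C ∪ A = Finset.univ.filter (fun i => i.val < m) := by
        intro A B C h
        rw [← h]
        ext i
        simp [Finset.mem_union]
        tauto
      have hswap12 : ∀ {A B C : Finset (Fin k)},
          A ∪ B ∪ C = Finset.univ.filter (fun i => i.val < m) →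
          B ∪ A ∪ C = Finset.univ.filter (fun i => i.val < m) := by
        intro A B C h
        rwa [Finset.union_comm B A]
      rcases le_total (∑ i ∈ P₁, s i) (∑ i ∈ P₂, s i) with hab | hba
      · rcases le_total (∑ i ∈ P₁, s i) (∑ i ∈ P₃, s i) with hac | hca
        · exact step P₁ P₂ P₃ d12 d13 d23 hu b2 b3 hab hac
        · exact step P₃ P₁ P₂ d13.symm d23.symm d12 (huswap (huswap hu)) b1 b2 hca
            (hca.trans hab)
      · rcases le_total (∑ i ∈ P₂, s i) (∑ i ∈ P₃, s i) with hbc | hcb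
        · exact step P₂ P₁ P₃ d12.symm d23 d13 (hswap12 hu) b1 b3 hba hbc
        · exact step P₃ P₁ P₂ d13.symm d23.symm d12 (huswap (huswap hu)) b1 b2
            (hcb.trans hba) hcb
  obtain ⟨P₁, P₂, P₃, d12, d13, d23, hu, b1, b2, b3⟩ := main k (by omega) le_rfl
  refine ⟨P₁, P₂, P₃, d12, d13, d23, ?_, b1, b2, b3⟩
  rw [hu]
  ext i
  simp [i.isLt]
end

section
/- Let U be a finite set, let F be a finite family of subsets of U, let X ⊆ U, and let t be a natural number. Then X is t-covered by F (i.e., there exist F_1, ..., F_t ∈ F with X ⊆ F_1 ∪ ... ∪ F_t) if and only if Σ_{Y ⊆ X} (−1)^{|X \ Y|} · c(Y)^t > 0, where c(Y) = |{I ⊆ Y : there exists F ∈ F with I ⊆ F}| counts the subsets of Y that are contained in some member of F, and the sum is taken over all subsets Y of X as an integer. -/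
/-!
A tuple `(F₁, …, Fₜ)` covering `X` can be shrunk to `(X ∩ F₁, …, X ∩ Fₜ)`, so `X` is `t`-covered
iff some `t`-tuple of subsets of members of `F` has union exactly `X`. Counting such tuples by
their union `Z`, `c(Y)^t = Σ_{Z ⊆ Y} #{tuples with union Z}`, and Möbius inversion on the
Boolean lattice turns the alternating sum into the number of tuples with union `X`.
-/

open Finset

namespace Finset

variable {α : Type*} [DecidableEq α]

theorem sum_powerset_filter_superset_neg_one_pow_card_sdiff {X Z : Finset α} (hZ : Z ⊆ X) :
    ∑ Y ∈ X.powerset with Z ⊆ Y, (-1 : ℤ) ^ #(X \ Y) = if Z = X then 1 else 0 := by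
  have hreindex : ∑ Y ∈ X.powerset with Z ⊆ Y, (-1 : ℤ) ^ #(X \ Y)
      = ∑ W ∈ (X \ Z).powerset, (-1 : ℤ) ^ #W := by
    refine sum_nbij' (X \ ·) (X \ ·) (fun Y hY => ?_) (fun W hW => ?_) (fun Y hY => ?_)
      (fun W hW => ?_) (fun _ _ => rfl)
    · obtain ⟨-, hZY⟩ := mem_filter.1 hY
      exact mem_powerset.2 (sdiff_subset_sdiff subset_rfl hZY)
    · have hWZ : Disjoint Z W := disjoint_of_subset_right (mem_powerset.1 hW) disjoint_sdiff
      exact mem_filter.2 ⟨mem_powerset.2 sdiff_subset, subset_sdiff.2 ⟨hZ, hWZ⟩⟩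
    · exact sdiff_sdiff_eq_self (mem_powerset.1 (mem_filter.1 hY).1)
    · exact sdiff_sdiff_eq_self ((mem_powerset.1 hW).trans sdiff_subset)
  rw [hreindex, sum_powerset_neg_one_pow_card]
  simp only [sdiff_eq_empty_iff_subset]
  exact if_congr ⟨(subset_antisymm hZ ·), (·.ge)⟩ rfl rfl

theorem sum_powerset_neg_one_pow_card_sdiff_smul_sum_powerset {M : Type*} [AddCommGroup M]
    (f : Finset α → M) (X : Finset α) :
    ∑ Y ∈ X.powerset, (-1 : ℤ) ^ #(X \ Y) • ∑ Z ∈ Y.powerset, f Z = f X := by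
  calc ∑ Y ∈ X.powerset, (-1 : ℤ) ^ #(X \ Y) • ∑ Z ∈ Y.powerset, f Z
      = ∑ Z ∈ X.powerset, ∑ Y ∈ X.powerset with Z ⊆ Y, (-1 : ℤ) ^ #(X \ Y) • f Z := by
        simp only [smul_sum]
        refine sum_comm' fun Y Z => ?_
        simp only [mem_powerset, mem_filter]
        exact ⟨fun ⟨hY, hZ⟩ => ⟨⟨hY, hZ⟩, hZ.trans hY⟩, fun ⟨⟨hY, hZ⟩, _⟩ => ⟨hY, hZ⟩⟩
    _ = ∑ Z ∈ X.powerset, if Z = X then f Z else 0 := by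
        refine sum_congr rfl fun Z hZ => ?_
        rw [← sum_smul, sum_powerset_filter_superset_neg_one_pow_card_sdiff (mem_powerset.1 hZ),
          ite_smul, one_smul, zero_smul]
    _ = f X := by rw [sum_ite_eq', if_pos (mem_powerset_self X)]

variable {ι : Type*} [Fintype ι]

theorem exists_mem_biUnion_powerset_biUnion_eq_iff
    (F : Finset (Finset α)) (X : Finset α) :
    (∃ g : ι → Finset α, (∀ i, g i ∈ F.biUnion powerset) ∧ univ.biUnion g = X)
      ↔ ∃ f : ι → Finset α, (∀ i, f i ∈ F) ∧ X ⊆ univ.biUnion f := by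
  simp only [mem_biUnion, mem_powerset]
  constructor
  · rintro ⟨g, hgF, rfl⟩
    choose f hfF hgf using hgF
    exact ⟨f, hfF, biUnion_mono fun i _ => hgf i⟩
  · rintro ⟨f, hfF, hXf⟩
    refine ⟨fun i => X ∩ f i, fun i => ⟨f i, hfF i, inter_subset_right⟩, ?_⟩
    rw [← inter_biUnion, inter_eq_left.2 hXf]

variable [DecidableEq ι]

theorem card_filter_subset_pow_eq_sum_card_biUnion_eq (S : Finset (Finset α)) (Y : Finset α) :
    #{I ∈ S | I ⊆ Y} ^ Fintype.card ι
      = ∑ Z ∈ Y.powerset, #{g ∈ Fintype.piFinset fun _ : ι => S | univ.biUnion g = Z} := by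
  have htuples : Fintype.piFinset (fun _ : ι => {I ∈ S | I ⊆ Y})
      = {g ∈ Fintype.piFinset fun _ : ι => S | univ.biUnion g ⊆ Y} := by
    ext g
    simp only [Fintype.mem_piFinset, mem_filter, biUnion_subset, mem_univ, true_imp_iff,
      forall_and]
  rw [← card_univ, ← prod_const, ← Fintype.card_piFinset, htuples,
    card_eq_sum_card_fiberwise fun g hg => mem_powerset.2 (mem_filter.1 hg).2]
  refine sum_congr rfl fun Z hZ => ?_
  rw [filter_filter]
  exact congrArg card <| filter_congr fun g _ =>
    ⟨And.right, fun h => ⟨h ▸ mem_powerset.1 hZ, h⟩⟩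

theorem sum_powerset_neg_one_pow_card_sdiff_mul_card_filter_subset_pow
    (S : Finset (Finset α)) (X : Finset α) :
    ∑ Y ∈ X.powerset, (-1 : ℤ) ^ #(X \ Y) * (#{I ∈ S | I ⊆ Y} : ℤ) ^ Fintype.card ι
      = #{g ∈ Fintype.piFinset fun _ : ι => S | univ.biUnion g = X} := by
  simp only [← smul_eq_mul, ← Nat.cast_pow, card_filter_subset_pow_eq_sum_card_biUnion_eq,
    Nat.cast_sum]
  exact sum_powerset_neg_one_pow_card_sdiff_smul_sum_powerset _ X

end Finset

theorem stmt8_general {α : Type*} [DecidableEq α]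
    (F : Finset (Finset α)) (X : Finset α) (t : ℕ) :
    (∃ f : Fin t → Finset α, (∀ i, f i ∈ F) ∧ X ⊆ Finset.univ.biUnion f)
      ↔ 0 < ∑ Y ∈ X.powerset,
          (-1) ^ (X \ Y).card *
            (({I : Finset α | I ⊆ Y ∧ ∃ A ∈ F, I ⊆ A}.ncard : ℤ)) ^ t := by
  have hcount : ∀ Y : Finset α, {I : Finset α | I ⊆ Y ∧ ∃ A ∈ F, I ⊆ A}.ncard
      = #{I ∈ F.biUnion powerset | I ⊆ Y} := by
    intro Y
    rw [← Set.ncard_coe_finset]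
    congr 1
    ext I
    simp [and_comm]
  have hsum := sum_powerset_neg_one_pow_card_sdiff_mul_card_filter_subset_pow
    (ι := Fin t) (F.biUnion powerset) X
  rw [Fintype.card_fin] at hsum
  simp only [hcount]
  rw [hsum, Nat.cast_pos, card_pos, filter_nonempty_iff,
    ← exists_mem_biUnion_powerset_biUnion_eq_iff]
  simp only [Fintype.mem_piFinset]

/-- `X` is `t`-covered by `F` if and only if the inclusion–exclusion expression
`Σ_{Y ⊆ X} (-1)^{|X \ Y|} c(Y)^t` is positive, where `c(Y)` counts the subsets
of `Y` contained in some member of `F`. -/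
theorem stmt8 {α : Type*} [Fintype α] [DecidableEq α]
    (F : Finset (Finset α)) (X : Finset α) (t : ℕ) :
    (∃ f : Fin t → Finset α, (∀ i, f i ∈ F) ∧ X ⊆ Finset.univ.biUnion f)
      ↔ 0 < ∑ Y ∈ X.powerset,
          (-1) ^ (X \ Y).card *
            (({I : Finset α | I ⊆ Y ∧ ∃ A ∈ F, I ⊆ A}.ncard : ℤ)) ^ t :=
  stmt8_general F X t
end

section
/- Let n ≥ 2 and r ≥ 1 be integers, let H be a nonempty finite pairwise independent family of functions from [n] = {1,...,n} to [r] = {1,...,r}, and let δ > 0 and 0 < κ ≤ 1 be reals. Then for every subset A ⊆ [n] with |A| ≥ κn and every j ∈ [r], the number of h ∈ H for which | |A ∩ h^{−1}(j)| − |A|/r | > δ|A|/r is at most |H| · r / (δ^2 κ^2 n). -/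
open Finset

/-!
Write `|A ∩ h⁻¹(j)| - |A|/r` as the sum over `x ∈ A` of the centred indicators
`[h x = j] - 1/r`. Summing the pair counts over the value at a second point shows that each
indicator has mean `1/r`, and then pairwise independence makes the centred indicators of distinct
points orthogonal over `H`. Hence the second moment is `|A| |H| (1/r - 1/r²) ≤ |A| |H| / r`, and
Chebyshev's inequality bounds the number of bad `h` by `|H| r / (δ² |A|) ≤ |H| r / (δ² κ² n)`.
-/

def IsPairwiseIndependent {ι α : Type*} [Fintype ι] {r : ℕ} (H : ι → α → Fin r) : Prop :=
  ∀ x x' : α, x ≠ x' → ∀ j j' : Fin r, #{a | H a x = j ∧ H a x' = j'} * r ^ 2 = Fintype.card ι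

theorem card_filter_lt_abs_mul_sq_le_sum_sq {ι R : Type*} [CommRing R] [LinearOrder R]
    [IsStrictOrderedRing R] (s : Finset ι) (f : ι → R) {t : R} (ht : 0 ≤ t) :
    #{a ∈ s | t < |f a|} * t ^ 2 ≤ ∑ a ∈ s, f a ^ 2 := by
  calc (#{a ∈ s | t < |f a|} : R) * t ^ 2 = ∑ a ∈ s with t < |f a|, t ^ 2 := by
        rw [sum_const, nsmul_eq_mul]
    _ ≤ ∑ a ∈ s with t < |f a|, f a ^ 2 := by
        refine sum_le_sum fun a ha => ?_
        rw [← sq_abs (f a)]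
        exact pow_le_pow_left₀ ht (mem_filter.mp ha).2.le 2
    _ ≤ ∑ a ∈ s, f a ^ 2 := sum_le_sum_of_subset_of_nonneg (filter_subset _ _)
        fun a _ _ => sq_nonneg (f a)

theorem sum_sq_sum_eq_of_pairwise_orthogonal {ι α R : Type*} [CommSemiring R] (s : Finset ι)
    (A : Finset α) (f : ι → α → R) (h : ∀ x ∈ A, ∀ y ∈ A, x ≠ y → ∑ a ∈ s, f a x * f a y = 0) :
    ∑ a ∈ s, (∑ x ∈ A, f a x) ^ 2 = ∑ x ∈ A, ∑ a ∈ s, f a x ^ 2 := by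
  simp_rw [sq, sum_mul_sum]
  rw [sum_comm]
  refine sum_congr rfl fun x hx => ?_
  rw [sum_comm, sum_eq_single_of_mem x hx fun y hy hyx => h x hx y hy (Ne.symm hyx)]

noncomputable def centeredIndicator {ι α : Type*} {r : ℕ} (H : ι → α → Fin r) (j : Fin r)
    (a : ι) (x : α) : ℝ :=
  (if H a x = j then 1 else 0) - 1 / r

namespace IsPairwiseIndependent

variable {ι α : Type*} [Fintype ι] {r : ℕ} {H : ι → α → Fin r}

theorem card_fiber_mul (hH : IsPairwiseIndependent H) [Nontrivial α] (x : α) (j : Fin r) :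
    #{a | H a x = j} * r = Fintype.card ι := by
  obtain ⟨x', hx'⟩ := exists_ne x
  have hsplit : #{a | H a x = j} = ∑ j' : Fin r, #{a | H a x = j ∧ H a x' = j'} := by
    rw [card_eq_sum_card_fiberwise (f := fun a => H a x') (t := univ) fun _ _ => mem_univ _]
    simp only [filter_filter]
  refine Nat.eq_of_mul_eq_mul_right j.pos ?_
  calc #{a | H a x = j} * r * r = ∑ j' : Fin r, #{a | H a x = j ∧ H a x' = j'} * r ^ 2 := by
        simp only [hsplit, sum_mul, sq, mul_assoc]
    _ = Fintype.card ι * r := by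
        simp [hH x x' hx'.symm, mul_comm]

theorem sum_indicator (hH : IsPairwiseIndependent H) [Nontrivial α] (x : α) (j : Fin r) :
    ∑ a, (if H a x = j then 1 else 0 : ℝ) = Fintype.card ι / r := by
  have hr : (r : ℝ) ≠ 0 := by exact_mod_cast j.pos.ne'
  rw [sum_boole, eq_div_iff hr]
  exact_mod_cast hH.card_fiber_mul x j

theorem sum_indicator_mul_indicator (hH : IsPairwiseIndependent H) {x y : α} (hxy : x ≠ y)
    (j : Fin r) :
    ∑ a, (if H a x = j then 1 else 0 : ℝ) * (if H a y = j then 1 else 0) =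
      Fintype.card ι / r ^ 2 := by
  have hr : (r : ℝ) ^ 2 ≠ 0 := by have := j.pos; positivity
  simp_rw [ite_zero_mul_ite_zero, one_mul]
  rw [sum_boole, eq_div_iff hr]
  exact_mod_cast hH x y hxy j j

theorem sum_centeredIndicator_mul (hH : IsPairwiseIndependent H) [Nontrivial α] (x y : α)
    (j : Fin r) :
    ∑ a, centeredIndicator H j a x * centeredIndicator H j a y =
      ∑ a, (if H a x = j then 1 else 0 : ℝ) * (if H a y = j then 1 else 0) -
        Fintype.card ι / r ^ 2 := by
  have hr : (r : ℝ) ≠ 0 := by exact_mod_cast j.pos.ne'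
  simp only [centeredIndicator, sub_mul, mul_sub, sum_sub_distrib, ← sum_mul, ← mul_sum,
    hH.sum_indicator, sum_const, card_univ, nsmul_eq_mul]
  field_simp
  ring

theorem sum_centeredIndicator_mul_of_ne (hH : IsPairwiseIndependent H) [Nontrivial α]
    {x y : α} (hxy : x ≠ y) (j : Fin r) :
    ∑ a, centeredIndicator H j a x * centeredIndicator H j a y = 0 := by
  rw [hH.sum_centeredIndicator_mul, hH.sum_indicator_mul_indicator hxy, sub_self]

theorem sum_centeredIndicator_sq (hH : IsPairwiseIndependent H) [Nontrivial α] (x : α)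
    (j : Fin r) :
    ∑ a, centeredIndicator H j a x ^ 2 = Fintype.card ι / r - Fintype.card ι / r ^ 2 := by
  simp_rw [sq, hH.sum_centeredIndicator_mul, ite_zero_mul_ite_zero, and_self, one_mul,
    hH.sum_indicator]
  ring

theorem sum_sq_card_filter_sub_le (hH : IsPairwiseIndependent H) [Nontrivial α]
    (A : Finset α) (j : Fin r) :
    ∑ a, ((#{x ∈ A | H a x = j} : ℝ) - #A / r) ^ 2 ≤ #A * Fintype.card ι / r := by
  have hdev : ∀ a, (#{x ∈ A | H a x = j} : ℝ) - #A / r = ∑ x ∈ A, centeredIndicator H j a x := by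
    intro a
    simp only [centeredIndicator, sum_sub_distrib, sum_boole, sum_const, nsmul_eq_mul]
    ring
  simp_rw [hdev]
  rw [sum_sq_sum_eq_of_pairwise_orthogonal _ _ _
    fun x _ y _ hxy => hH.sum_centeredIndicator_mul_of_ne hxy j]
  simp only [hH.sum_centeredIndicator_sq, sum_const, nsmul_eq_mul, mul_div_assoc]
  gcongr
  exact sub_le_self _ (by positivity)

theorem card_deviation_mul_le (hH : IsPairwiseIndependent H) [Nontrivial α]
    (A : Finset α) (j : Fin r) {δ : ℝ} (hδ : 0 ≤ δ) :
    #{a | δ * #A / r < |(#{x ∈ A | H a x = j} : ℝ) - #A / r|} * δ ^ 2 * #A ≤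
      Fintype.card ι * r := by
  have hr : (r : ℝ) ≠ 0 := by exact_mod_cast j.pos.ne'
  rcases (Nat.zero_le #A).eq_or_lt with hA | hA
  · simp only [← hA, Nat.cast_zero, mul_zero]
    positivity
  have hA' : (0 : ℝ) < #A := by exact_mod_cast hA
  have hδA : (0 : ℝ) ≤ δ * #A / r := by positivity
  have key := (card_filter_lt_abs_mul_sq_le_sum_sq univ _ hδA).trans
    (hH.sum_sq_card_filter_sub_le A j)
  generalize (#{a | δ * #A / r < |(#{x ∈ A | H a x = j} : ℝ) - #A / r|} : ℝ) = B at key ⊢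
  refine le_of_mul_le_mul_right ?_ hA'
  calc B * δ ^ 2 * (#A : ℝ) * #A = B * (δ * #A / r) ^ 2 * r ^ 2 := by
        rw [div_pow, mul_div_assoc', div_mul_cancel₀ _ (pow_ne_zero 2 hr)]; ring
    _ ≤ (#A : ℝ) * Fintype.card ι / r * r ^ 2 := by gcongr
    _ = (Fintype.card ι : ℝ) * r * #A := by field_simp

end IsPairwiseIndependent

theorem stmt10_general (n r N : ℕ) (hn : 2 ≤ n)
    (H : Fin N → (Fin n → Fin r))
    (hpi : ∀ i i' : Fin n, i ≠ i' → ∀ j j' : Fin r,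
      (Finset.univ.filter (fun a : Fin N => H a i = j ∧ H a i' = j')).card * r ^ 2 = N)
    (δ κ : ℝ) (hδ : 0 < δ) (hκ0 : 0 < κ) (hκ1 : κ ≤ 1)
    (A : Finset (Fin n)) (hA : κ * n ≤ (A.card : ℝ)) (j : Fin r) :
    (({a : Fin N |
        |((A.filter (fun x => H a x = j)).card : ℝ) - (A.card : ℝ) / r|
          > δ * (A.card : ℝ) / r}.ncard : ℝ))
      ≤ (N : ℝ) * r / (δ ^ 2 * κ ^ 2 * n) := by
  have hH : IsPairwiseIndependent H := by simpa [IsPairwiseIndependent] using hpi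
  have : Nontrivial (Fin n) := Fin.nontrivial_iff_two_le.mpr hn
  have hcount := hH.card_deviation_mul_le A j hδ.le
  rw [Fintype.card_fin] at hcount
  have hκA : δ ^ 2 * κ ^ 2 * n ≤ δ ^ 2 * #A := by
    rw [mul_assoc]
    gcongr
    nlinarith
  rw [Set.ncard_eq_toFinset_card', Set.toFinset_ofPred, le_div_iff₀ (by positivity)]
  calc _ ≤ (#{a | δ * #A / r < |(#{x ∈ A | H a x = j} : ℝ) - #A / r|} : ℝ) * (δ ^ 2 * #A) :=
        mul_le_mul_of_nonneg_left hκA (by positivity)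
    _ ≤ N * r := by rw [← mul_assoc]; exact hcount

/-- Chebyshev bound for pairwise independent hash families: for `A ⊆ [n]` with
`|A| ≥ κn` and `j ∈ [r]`, the number of `h ∈ H` with
`||A ∩ h⁻¹(j)| - |A|/r| > δ|A|/r` is at most `|H|·r/(δ²κ²n)`. -/
theorem stmt10 (n r N : ℕ) (hn : 2 ≤ n) (hr : 1 ≤ r) (hN : 0 < N)
    (H : Fin N → (Fin n → Fin r))
    (hpi : ∀ i i' : Fin n, i ≠ i' → ∀ j j' : Fin r,
      (Finset.univ.filter (fun a : Fin N => H a i = j ∧ H a i' = j')).card * r ^ 2 = N)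
    (δ κ : ℝ) (hδ : 0 < δ) (hκ0 : 0 < κ) (hκ1 : κ ≤ 1)
    (A : Finset (Fin n)) (hA : κ * n ≤ (A.card : ℝ)) (j : Fin r) :
    (({a : Fin N |
        |((A.filter (fun x => H a x = j)).card : ℝ) - (A.card : ℝ) / r|
          > δ * (A.card : ℝ) / r}.ncard : ℝ))
      ≤ (N : ℝ) * r / (δ ^ 2 * κ ^ 2 * n) :=
  stmt10_general n r N hn H hpi δ κ hδ hκ0 hκ1 A hA j
end
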